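/- Let β be a sparse RNN parameter with nnz(w^h(β)) = r_{w_h} ≥ 1 (h = 1,…,H), nnz(v^h(β)) = r_{v_h} ≥ 1 (h = 1,…,H−1), and all entries bounded in absolute value by E ≥ 1; let γ denote the set of indices of nonzero entries of β. Let β̌ be an RNN parameter whose entries vanish at every index outside γ and satisfy |β_j − β̌_j| ≤ δ₁ for every j ∈ γ, where δ₁ ≥ 0. Then for every t ≥ 1 and every hidden layer 1 ≤ i ≤ H−1, Σ_{j=1}^{L_i} |z_t^i(β)(j) − z_t^i(β̌)(j)| ≤ t^{i+1} · i · δ₁ · (Π_{k=1}^{i} r_{w_k}) · (Π_{k=1}^{i} r_{v_k})^{t−1} · (E+δ₁)^{(i+1)t−2}. -/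

import Mathlib

open Finset

/-- Number of nonzero entries of a matrix. -/
noncomputable def nnz {m n : Type*} [Fintype m] [Fintype n] (A : Matrix m n ℝ) : ℕ :=
  Nat.card {p : m × n // A p.1 p.2 ≠ 0}

/-- One time-step of the RNN: given the previous time slice `prev` of hidden states and the
current input `xt`, compute the hidden states of all layers at the current time. -/
noncomputable def zLayer (L : ℕ → ℕ)
    (w : (h : ℕ) → Matrix (Fin (L h)) (Fin (L (h - 1))) ℝ)
    (v : (h : ℕ) → Matrix (Fin (L h)) (Fin (L h)) ℝ)
    (ψ : ℕ → ℝ → ℝ)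
    (prev : (h : ℕ) → Fin (L h) → ℝ) (xt : Fin (L 0) → ℝ) :
    (h : ℕ) → Fin (L h) → ℝ
  | 0 => xt
  | h + 1 => fun j =>
      ψ (h + 1) ((w (h + 1)).mulVec (zLayer L w v ψ prev xt h) j
        + (v (h + 1)).mulVec (prev (h + 1)) j)

/-- The hidden states `hiddenState L w v ψ x t h : Fin (L h) → ℝ` of the RNN:
`hiddenState L w v ψ x t 0 = x t` for `t ≥ 1`, `hiddenState L w v ψ x 0 h = 0`, and
`hiddenState L w v ψ x t h = ψ h (w h ⬝ z_t^{h-1} + v h ⬝ z_{t-1}^h)` for `t, h ≥ 1`. -/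
noncomputable def hiddenState (L : ℕ → ℕ)
    (w : (h : ℕ) → Matrix (Fin (L h)) (Fin (L (h - 1))) ℝ)
    (v : (h : ℕ) → Matrix (Fin (L h)) (Fin (L h)) ℝ)
    (ψ : ℕ → ℝ → ℝ)
    (x : ℕ → Fin (L 0) → ℝ) : ℕ → (h : ℕ) → Fin (L h) → ℝ
  | 0 => fun _ _ => 0
  | t + 1 => zLayer L w v ψ (hiddenState L w v ψ x t) (x (t + 1))

/-- The output of the `H`-layer RNN at time `t`: `O_t = w^H z_t^{H-1}`. -/
noncomputable def output (L : ℕ → ℕ) (H : ℕ)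
    (w : (h : ℕ) → Matrix (Fin (L h)) (Fin (L (h - 1))) ℝ)
    (v : (h : ℕ) → Matrix (Fin (L h)) (Fin (L h)) ℝ)
    (ψ : ℕ → ℝ → ℝ)
    (x : ℕ → Fin (L 0) → ℝ) (t : ℕ) : Fin (L H) → ℝ :=
  (w H).mulVec (hiddenState L w v ψ x t (H - 1))

/-!
A hidden state `z_{t+1}^{i+1}` depends only on `z_{t+1}^i` and `z_t^{i+1}`, so all estimates
are proved by induction over the grid of pairs (time, layer). The basic estimate is that a
matrix supported on the support of `A`, with entries bounded by `C`, maps vectors with entries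
bounded by `U` to vectors of `ℓ¹`-norm at most `C · nnz A · U`. With `F = E + δ₁` this first gives
`|z_t^i| ≤ t^i (∏ r_w) (∏ r_v)^{t-1} F^{i t}`. Then `w z - w̌ ž = (w - w̌) z + w̌ (z - ž)` together
with the 1-Lipschitz activations turns the two predecessors' bounds into the bound at
`(t + 1, i + 1)`; the induction step closes because
`(t+1)^i + i (t+1)^{i+1} + t^{i+1} + (i+1) t^{i+2} ≤ (i+1) (t+1)^{i+2}`.
-/

open Matrix

lemma LipschitzWith.abs_sub_le {f : ℝ → ℝ} (hf : LipschitzWith 1 f) (a b : ℝ) :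
    |f a - f b| ≤ |a - b| := by
  simpa [Real.dist_eq] using hf.dist_le_mul a b

lemma LipschitzWith.abs_apply_le {f : ℝ → ℝ} (hf : LipschitzWith 1 f) (hf0 : f 0 = 0) (a : ℝ) :
    |f a| ≤ |a| := by
  simpa [hf0] using hf.abs_sub_le a 0

lemma abs_le_of_sum_abs_le {ι : Type*} [Fintype ι] {u : ι → ℝ} {D : ℝ} (h : ∑ j, |u j| ≤ D)
    (k : ι) : |u k| ≤ D :=
  (single_le_sum (fun j _ => abs_nonneg (u j)) (mem_univ k)).trans h

lemma nnz_le_nnz_of_support {m n : Type*} [Fintype m] [Fintype n] {A B : Matrix m n ℝ}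
    (hBA : ∀ j k, A j k = 0 → B j k = 0) : nnz B ≤ nnz A :=
  Nat.card_le_card_of_injective (fun p => ⟨p.1, fun hA => p.2 (hBA _ _ hA)⟩)
    fun _ _ h => Subtype.ext (congrArg Subtype.val h :)

lemma sum_sum_abs_le_mul_nnz {m n : Type*} [Fintype m] [Fintype n] {B : Matrix m n ℝ} {C : ℝ}
    (hB : ∀ j k, |B j k| ≤ C) : ∑ j, ∑ k, |B j k| ≤ C * nnz B := by
  classical
  calc ∑ j, ∑ k, |B j k| = ∑ p : m × n with |B p.1 p.2| ≠ 0, |B p.1 p.2| := by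
        rw [sum_filter_ne_zero, ← Fintype.sum_prod_type']
    _ ≤ #{p : m × n | |B p.1 p.2| ≠ 0} • C := sum_le_card_nsmul _ _ _ fun p _ => hB p.1 p.2
    _ = C * nnz B := by
        simp only [abs_ne_zero, nsmul_eq_mul, nnz, Nat.card_eq_fintype_card, Fintype.card_subtype]
        ring

lemma sum_abs_mulVec_le {m n : Type*} [Fintype m] [Fintype n] (B : Matrix m n ℝ) {u : n → ℝ}
    {U : ℝ} (hu : ∀ k, |u k| ≤ U) : ∑ j, |(B *ᵥ u) j| ≤ (∑ j, ∑ k, |B j k|) * U := by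
  rw [sum_mul]
  refine sum_le_sum fun j _ => ?_
  calc |(B *ᵥ u) j| ≤ ∑ k, |B j k * u k| := abs_sum_le_sum_abs _ _
    _ ≤ ∑ k, |B j k| * U := sum_le_sum fun k _ => by
        rw [abs_mul]; exact mul_le_mul_of_nonneg_left (hu k) (abs_nonneg _)
    _ = (∑ k, |B j k|) * U := (sum_mul ..).symm

lemma sum_abs_mulVec_le_mul_nnz {m n : Type*} [Fintype m] [Fintype n] {A B : Matrix m n ℝ}
    (hBA : ∀ j k, A j k = 0 → B j k = 0) {C U : ℝ} (hC : 0 ≤ C) (hU : 0 ≤ U)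
    (hB : ∀ j k, |B j k| ≤ C) {u : n → ℝ} (hu : ∀ k, |u k| ≤ U) :
    ∑ j, |(B *ᵥ u) j| ≤ C * nnz A * U :=
  calc ∑ j, |(B *ᵥ u) j| ≤ (∑ j, ∑ k, |B j k|) * U := sum_abs_mulVec_le B hu
    _ ≤ C * nnz B * U := by gcongr; exact sum_sum_abs_le_mul_nnz hB
    _ ≤ C * nnz A * U := by gcongr; exact nnz_le_nnz_of_support hBA

lemma abs_mulVec_apply_le_mul_nnz {m n : Type*} [Fintype m] [Fintype n] {B : Matrix m n ℝ}
    {C U : ℝ} (hC : 0 ≤ C) (hU : 0 ≤ U) (hB : ∀ j k, |B j k| ≤ C) {u : n → ℝ}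
    (hu : ∀ k, |u k| ≤ U) (j : m) : |(B *ᵥ u) j| ≤ C * nnz B * U :=
  abs_le_of_sum_abs_le (sum_abs_mulVec_le_mul_nnz (fun _ _ h => h) hC hU hB hu) j

def IsSparsePerturbation {m n : Type*} (A A' : Matrix m n ℝ) (δ : ℝ) : Prop :=
  (∀ j k, A j k = 0 → A' j k = 0) ∧ ∀ j k, |A j k - A' j k| ≤ δ

namespace IsSparsePerturbation

variable {m n : Type*} {A A' : Matrix m n ℝ} {δ : ℝ}

lemma of_forall (hδ : 0 ≤ δ)
    (h : ∀ j k, (A j k = 0 → A' j k = 0) ∧ (A j k ≠ 0 → |A j k - A' j k| ≤ δ)) :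
    IsSparsePerturbation A A' δ := by
  refine ⟨fun j k => (h j k).1, fun j k => ?_⟩
  by_cases hA : A j k = 0
  · simpa [hA, (h j k).1 hA] using hδ
  · exact (h j k).2 hA

lemma abs_le (hAA' : IsSparsePerturbation A A' δ) {E : ℝ} (hA : ∀ j k, |A j k| ≤ E) (j : m)
    (k : n) : |A' j k| ≤ E + δ := by
  linarith [abs_sub_abs_le_abs_sub (A' j k) (A j k), abs_sub_comm (A' j k) (A j k), hA j k,
    hAA'.2 j k]

lemma sum_abs_mulVec_sub_mulVec_le [Fintype m] [Fintype n] (hAA' : IsSparsePerturbation A A' δ)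
    (hδ : 0 ≤ δ) {E U D : ℝ} (hE : 0 ≤ E) (hU : 0 ≤ U) (hD : 0 ≤ D) (hA : ∀ j k, |A j k| ≤ E)
    {u u' : n → ℝ} (hu : ∀ k, |u k| ≤ U) (huu' : ∀ k, |u k - u' k| ≤ D) :
    ∑ j, |(A *ᵥ u) j - (A' *ᵥ u') j| ≤ δ * nnz A * U + (E + δ) * nnz A * D := by
  have hsplit : ∀ j, (A *ᵥ u) j - (A' *ᵥ u') j = ((A - A') *ᵥ u) j + (A' *ᵥ (u - u')) j := by
    intro j
    simp only [Matrix.sub_mulVec, Matrix.mulVec_sub, Pi.sub_apply]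
    ring
  have hsupp : ∀ j k, A j k = 0 → (A - A') j k = 0 := fun j k hA => by
    simp [hA, hAA'.1 j k hA]
  calc ∑ j, |(A *ᵥ u) j - (A' *ᵥ u') j|
      ≤ ∑ j, |((A - A') *ᵥ u) j| + ∑ j, |(A' *ᵥ (u - u')) j| := by
        rw [← sum_add_distrib]
        exact sum_le_sum fun j _ => (hsplit j).symm ▸ abs_add_le _ _
    _ ≤ δ * nnz A * U + (E + δ) * nnz A * D :=
        add_le_add (sum_abs_mulVec_le_mul_nnz hsupp hδ hU hAA'.2 hu)
          (sum_abs_mulVec_le_mul_nnz hAA'.1 (by linarith) hD (hAA'.abs_le hA) huu')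

end IsSparsePerturbation

noncomputable def stateBound (r s : ℕ → ℝ) (F : ℝ) (t i : ℕ) : ℝ :=
  (t : ℝ) ^ i * (∏ k ∈ Icc 1 i, r k) * (∏ k ∈ Icc 1 i, s k) ^ (t - 1) * F ^ (i * t)

noncomputable def diffBound (r s : ℕ → ℝ) (F δ : ℝ) (t i : ℕ) : ℝ :=
  (t : ℝ) ^ (i + 1) * (i : ℝ) * δ * (∏ k ∈ Icc 1 i, r k) * (∏ k ∈ Icc 1 i, s k) ^ (t - 1)
    * F ^ ((i + 1) * t - 2)

lemma pow_succ_le_mul_add_one_pow {x : ℝ} (hx : 0 ≤ x) (n : ℕ) : x ^ (n + 1) ≤ x * (x + 1) ^ n := by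
  rw [pow_succ']
  gcongr
  linarith

lemma add_one_pow_add_pow_succ_le {x : ℝ} (hx : 0 ≤ x) (i : ℕ) :
    (x + 1) ^ i + x ^ (i + 1) ≤ (x + 1) ^ (i + 1) := by
  nlinarith [pow_succ_le_mul_add_one_pow hx i, pow_succ (x + 1) i]

lemma coeff_diffBound_le {x : ℝ} (hx : 0 ≤ x) (i : ℕ) :
    (x + 1) ^ i + i * (x + 1) ^ (i + 1) + (x ^ (i + 1) + (i + 1) * x ^ (i + 2))
      ≤ (i + 1) * (x + 1) ^ (i + 2) := by
  have hi : (0 : ℝ) ≤ i := i.cast_nonneg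
  nlinarith [pow_succ_le_mul_add_one_pow hx i, pow_succ_le_mul_add_one_pow hx (i + 1),
    pow_succ (x + 1) i, pow_succ (x + 1) (i + 1)]

section Arithmetic

variable {r s : ℕ → ℝ} {F δ : ℝ} {i : ℕ}

lemma one_le_prod_Icc (hr : ∀ k ∈ Icc 1 (i + 1), 1 ≤ r k) : 1 ≤ ∏ k ∈ Icc 1 i, r k :=
  one_le_prod fun k hk => hr k (Icc_subset_Icc_right i.le_succ hk)

lemma stateBound_succ_succ (hF : 1 ≤ F) (hr : ∀ k ∈ Icc 1 (i + 1), 1 ≤ r k)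
    (hs : ∀ k ∈ Icc 1 (i + 1), 1 ≤ s k) (t : ℕ) :
    F * r (i + 1) * stateBound r s F (t + 1) i + F * s (i + 1) * stateBound r s F t (i + 1)
      ≤ stateBound r s F (t + 1) (i + 1) := by
  have ha := one_le_prod_Icc hr
  have hb := one_le_prod_Icc hs
  have hc := hr (i + 1) (by simp)
  have hd := hs (i + 1) (by simp)
  unfold stateBound
  rw [prod_Icc_succ_top (by omega) r, prod_Icc_succ_top (by omega) s, Nat.add_sub_cancel]
  set a := ∏ k ∈ Icc 1 i, r k
  set b := ∏ k ∈ Icc 1 i, s k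
  set c := r (i + 1)
  set d := s (i + 1)
  have absorb : ∀ X e, X ≤ (b * d) ^ t → e ≤ (i + 1) * (t + 1) →
      a * c * X * F ^ e ≤ a * c * (b * d) ^ t * F ^ ((i + 1) * (t + 1)) :=
    fun X e hX he => by gcongr
  set M := a * c * (b * d) ^ t * F ^ ((i + 1) * (t + 1))
  have h1 : F * c * (((t + 1 : ℕ) : ℝ) ^ i * a * b ^ t * F ^ (i * (t + 1)))
      ≤ ((t + 1 : ℕ) : ℝ) ^ i * M := by
    calc _ = ((t + 1 : ℕ) : ℝ) ^ i * (a * c * b ^ t * F ^ (i * (t + 1) + 1)) := by ring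
      _ ≤ _ := by
        gcongr
        exact absorb _ _ (by gcongr; nlinarith) (by ring_nf; omega)
  have h2 : F * d * ((t : ℝ) ^ (i + 1) * (a * c) * (b * d) ^ (t - 1) * F ^ ((i + 1) * t))
      ≤ (t : ℝ) ^ (i + 1) * M := by
    rcases t with _ | t
    · simp
    calc _ = ((t + 1 : ℕ) : ℝ) ^ (i + 1)
          * (a * c * ((b * d) ^ t * d) * F ^ ((i + 1) * (t + 1) + 1)) := by
          simp only [Nat.add_sub_cancel]; ring
      _ ≤ _ := by
        gcongr
        exact absorb _ _ (by rw [pow_succ]; gcongr; nlinarith) (by ring_nf; omega)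
  calc _ ≤ ((t + 1 : ℕ) : ℝ) ^ i * M + (t : ℝ) ^ (i + 1) * M := add_le_add h1 h2
    _ ≤ ((t + 1 : ℕ) : ℝ) ^ (i + 1) * M := by
        rw [← add_mul]
        gcongr
        push_cast
        exact add_one_pow_add_pow_succ_le t.cast_nonneg i
    _ = _ := by ring

lemma diffBound_layer_terms_le (hF : 1 ≤ F) (hδ : 0 ≤ δ) (hr : ∀ k ∈ Icc 1 (i + 1), 1 ≤ r k)
    (hs : ∀ k ∈ Icc 1 (i + 1), 1 ≤ s k) (t : ℕ) :
    δ * r (i + 1) * stateBound r s F (t + 1) i + F * r (i + 1) * diffBound r s F δ (t + 1) i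
      ≤ (((t + 1 : ℕ) : ℝ) ^ i + i * ((t + 1 : ℕ) : ℝ) ^ (i + 1)) * (δ * (∏ k ∈ Icc 1 (i + 1), r k)
        * (∏ k ∈ Icc 1 (i + 1), s k) ^ t * F ^ ((i + 2) * (t + 1) - 2)) := by
  have ha := one_le_prod_Icc hr
  have hb := one_le_prod_Icc hs
  have hc := hr (i + 1) (by simp)
  have hd := hs (i + 1) (by simp)
  unfold stateBound diffBound
  rw [prod_Icc_succ_top (by omega) r, prod_Icc_succ_top (by omega) s, Nat.add_sub_cancel]
  set a := ∏ k ∈ Icc 1 i, r k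
  set b := ∏ k ∈ Icc 1 i, s k
  set c := r (i + 1)
  set d := s (i + 1)
  have absorb : ∀ e, e ≤ (i + 2) * (t + 1) - 2 →
      δ * (a * c) * b ^ t * F ^ e ≤ δ * (a * c) * (b * d) ^ t * F ^ ((i + 2) * (t + 1) - 2) :=
    fun e he => by gcongr; nlinarith
  set G := δ * (a * c) * (b * d) ^ t * F ^ ((i + 2) * (t + 1) - 2)
  have h1 : δ * c * (((t + 1 : ℕ) : ℝ) ^ i * a * b ^ t * F ^ (i * (t + 1)))
      ≤ ((t + 1 : ℕ) : ℝ) ^ i * G := by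
    calc _ = ((t + 1 : ℕ) : ℝ) ^ i * (δ * (a * c) * b ^ t * F ^ (i * (t + 1))) := by ring
      _ ≤ _ := by gcongr; exact absorb _ (by ring_nf; omega)
  have h2 : F * c * (((t + 1 : ℕ) : ℝ) ^ (i + 1) * i * δ * a * b ^ t
      * F ^ ((i + 1) * (t + 1) - 2)) ≤ i * ((t + 1 : ℕ) : ℝ) ^ (i + 1) * G := by
    rcases i.eq_zero_or_pos with rfl | hi
    · simp
    calc _ = i * ((t + 1 : ℕ) : ℝ) ^ (i + 1)
          * (δ * (a * c) * b ^ t * F ^ ((i + 1) * (t + 1) - 2 + 1)) := by ring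
      _ ≤ _ := by gcongr; exact absorb _ (by ring_nf; omega)
  calc _ ≤ ((t + 1 : ℕ) : ℝ) ^ i * G + i * ((t + 1 : ℕ) : ℝ) ^ (i + 1) * G := add_le_add h1 h2
    _ = _ := by ring

lemma diffBound_time_terms_le (hF : 1 ≤ F) (hδ : 0 ≤ δ) (hr : ∀ k ∈ Icc 1 (i + 1), 1 ≤ r k)
    (hs : ∀ k ∈ Icc 1 (i + 1), 1 ≤ s k) (t : ℕ) :
    δ * s (i + 1) * stateBound r s F t (i + 1) + F * s (i + 1) * diffBound r s F δ t (i + 1)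
      ≤ ((t : ℝ) ^ (i + 1) + (i + 1) * (t : ℝ) ^ (i + 2)) * (δ * (∏ k ∈ Icc 1 (i + 1), r k)
        * (∏ k ∈ Icc 1 (i + 1), s k) ^ t * F ^ ((i + 2) * (t + 1) - 2)) := by
  rcases t with _ | t
  · simp [stateBound, diffBound]
  have ha := one_le_prod hr
  have hb := one_le_prod_Icc hs
  have hd := hs (i + 1) (by simp)
  unfold stateBound diffBound
  rw [Nat.add_sub_cancel, prod_Icc_succ_top (by omega) s]
  set a := ∏ k ∈ Icc 1 (i + 1), r k
  set b := ∏ k ∈ Icc 1 i, s k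
  set d := s (i + 1)
  have absorb : ∀ e, e ≤ (i + 2) * (t + 1 + 1) - 2 →
      δ * a * ((b * d) ^ t * d) * F ^ e
        ≤ δ * a * (b * d) ^ (t + 1) * F ^ ((i + 2) * (t + 1 + 1) - 2) :=
    fun e he => by rw [pow_succ]; gcongr; nlinarith
  set G := δ * a * (b * d) ^ (t + 1) * F ^ ((i + 2) * (t + 1 + 1) - 2)
  have h1 : δ * d * (((t + 1 : ℕ) : ℝ) ^ (i + 1) * a * (b * d) ^ t * F ^ ((i + 1) * (t + 1)))
      ≤ ((t + 1 : ℕ) : ℝ) ^ (i + 1) * G := by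
    calc _ = ((t + 1 : ℕ) : ℝ) ^ (i + 1)
          * (δ * a * ((b * d) ^ t * d) * F ^ ((i + 1) * (t + 1))) := by ring
      _ ≤ _ := by gcongr; exact absorb _ (by ring_nf; omega)
  have h2 : F * d * (((t + 1 : ℕ) : ℝ) ^ (i + 1 + 1) * ((i + 1 : ℕ) : ℝ) * δ * a * (b * d) ^ t
      * F ^ ((i + 1 + 1) * (t + 1) - 2)) ≤ (i + 1) * ((t + 1 : ℕ) : ℝ) ^ (i + 2) * G := by
    calc _ = (i + 1) * ((t + 1 : ℕ) : ℝ) ^ (i + 2)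
          * (δ * a * ((b * d) ^ t * d) * F ^ ((i + 1 + 1) * (t + 1) - 2 + 1)) := by
          push_cast; ring
      _ ≤ _ := by gcongr; exact absorb _ (by ring_nf; omega)
  calc _ ≤ ((t + 1 : ℕ) : ℝ) ^ (i + 1) * G + (i + 1) * ((t + 1 : ℕ) : ℝ) ^ (i + 2) * G :=
        add_le_add h1 h2
    _ = _ := by ring

lemma diffBound_succ_succ (hF : 1 ≤ F) (hδ : 0 ≤ δ) (hr : ∀ k ∈ Icc 1 (i + 1), 1 ≤ r k)
    (hs : ∀ k ∈ Icc 1 (i + 1), 1 ≤ s k) (t : ℕ) :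
    δ * r (i + 1) * stateBound r s F (t + 1) i + F * r (i + 1) * diffBound r s F δ (t + 1) i
      + (δ * s (i + 1) * stateBound r s F t (i + 1) + F * s (i + 1) * diffBound r s F δ t (i + 1))
      ≤ diffBound r s F δ (t + 1) (i + 1) := by
  have ha := one_le_prod hr
  have hb := one_le_prod hs
  calc _ ≤ _ := add_le_add (diffBound_layer_terms_le hF hδ hr hs t)
        (diffBound_time_terms_le hF hδ hr hs t)
    _ ≤ ((i + 1) * ((t : ℝ) + 1) ^ (i + 2)) * (δ * (∏ k ∈ Icc 1 (i + 1), r k)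
        * (∏ k ∈ Icc 1 (i + 1), s k) ^ t * F ^ ((i + 2) * (t + 1) - 2)) := by
        rw [← add_mul]
        gcongr
        push_cast
        exact coeff_diffBound_le t.cast_nonneg i
    _ = _ := by unfold diffBound; push_cast; ring_nf

end Arithmetic

lemma grid_induction {P : ℕ → ℕ → Prop} (n : ℕ) (zero_left : ∀ i, P 0 i)
    (zero_right : ∀ t, P (t + 1) 0)
    (succ_succ : ∀ t i, i < n → P (t + 1) i → P t (i + 1) → P (t + 1) (i + 1)) :
    ∀ t i, i ≤ n → P t i := by
  intro t
  induction t with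
  | zero => exact fun i _ => zero_left i
  | succ t iht =>
    intro i
    induction i with
    | zero => exact fun _ => zero_right t
    | succ i ihi => exact fun hi => succ_succ t i hi (ihi (Nat.le_of_succ_le hi)) (iht (i + 1) hi)

lemma one_le_cast_on_Icc {f : ℕ → ℕ} {n i : ℕ} (hf : ∀ h, 1 ≤ h → h ≤ n → 1 ≤ f h) (hi : i < n) :
    ∀ k ∈ Icc 1 (i + 1), (1 : ℝ) ≤ f k := fun k hk => by
  have := mem_Icc.1 hk
  exact_mod_cast hf k this.1 (by omega)

section Network

variable {L : ℕ → ℕ} {w w' : (h : ℕ) → Matrix (Fin (L h)) (Fin (L (h - 1))) ℝ}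
  {v v' : (h : ℕ) → Matrix (Fin (L h)) (Fin (L h)) ℝ} {ψ : ℕ → ℝ → ℝ} {x : ℕ → Fin (L 0) → ℝ}

lemma hiddenState_zero_apply (i : ℕ) (j : Fin (L i)) : hiddenState L w v ψ x 0 i j = 0 := rfl

lemma hiddenState_succ_zero (t : ℕ) : hiddenState L w v ψ x (t + 1) 0 = x (t + 1) := rfl

lemma hiddenState_succ_succ (t i : ℕ) (j : Fin (L (i + 1))) :
    hiddenState L w v ψ x (t + 1) (i + 1) j =
      ψ (i + 1) ((w (i + 1) *ᵥ hiddenState L w v ψ x (t + 1) i) j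
        + (v (i + 1) *ᵥ hiddenState L w v ψ x t (i + 1)) j) := rfl

lemma abs_hiddenState_succ_succ_le {i : ℕ} (hψ : LipschitzWith 1 (ψ (i + 1)))
    (hψ0 : ψ (i + 1) 0 = 0) (t : ℕ) (j : Fin (L (i + 1))) :
    |hiddenState L w v ψ x (t + 1) (i + 1) j| ≤
      |(w (i + 1) *ᵥ hiddenState L w v ψ x (t + 1) i) j|
        + |(v (i + 1) *ᵥ hiddenState L w v ψ x t (i + 1)) j| := by
  rw [hiddenState_succ_succ]
  exact (hψ.abs_apply_le hψ0 _).trans (abs_add_le _ _)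

lemma sum_abs_hiddenState_sub_succ_succ_le {i : ℕ} (hψ : LipschitzWith 1 (ψ (i + 1))) (t : ℕ) :
    ∑ j, |hiddenState L w v ψ x (t + 1) (i + 1) j - hiddenState L w' v' ψ x (t + 1) (i + 1) j| ≤
      ∑ j, |(w (i + 1) *ᵥ hiddenState L w v ψ x (t + 1) i) j
          - (w' (i + 1) *ᵥ hiddenState L w' v' ψ x (t + 1) i) j|
        + ∑ j, |(v (i + 1) *ᵥ hiddenState L w v ψ x t (i + 1)) j
          - (v' (i + 1) *ᵥ hiddenState L w' v' ψ x t (i + 1)) j| := by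
  rw [← sum_add_distrib]
  refine sum_le_sum fun j _ => ?_
  rw [hiddenState_succ_succ, hiddenState_succ_succ]
  refine (hψ.abs_sub_le _ _).trans (le_of_eq_of_le ?_ (abs_add_le _ _))
  ring_nf

theorem abs_hiddenState_le_stateBound (n : ℕ) {F : ℝ} (hF : 1 ≤ F)
    (hψ : ∀ h, 1 ≤ h → h ≤ n → LipschitzWith 1 (ψ h) ∧ ψ h 0 = 0) (hx : ∀ s j, |x s j| ≤ 1)
    (hw : ∀ h, 1 ≤ h → h ≤ n → ∀ j k, |w h j k| ≤ F)
    (hv : ∀ h, 1 ≤ h → h ≤ n → ∀ j k, |v h j k| ≤ F)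
    (hwr : ∀ h, 1 ≤ h → h ≤ n → 1 ≤ nnz (w h)) (hvr : ∀ h, 1 ≤ h → h ≤ n → 1 ≤ nnz (v h)) :
    ∀ t i, i ≤ n → ∀ j, |hiddenState L w v ψ x t i j|
      ≤ stateBound (fun k => nnz (w k)) (fun k => nnz (v k)) F t i := by
  have hF0 : 0 ≤ F := by linarith
  refine grid_induction n (fun i j => ?_) (fun t j => ?_) fun t i hi ih₁ ih₂ j => ?_
  · rw [hiddenState_zero_apply, abs_zero]
    unfold stateBound
    positivity
  · simpa [hiddenState_succ_zero, stateBound] using hx (t + 1) j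
  · have h1 : 1 ≤ i + 1 := Nat.le_add_left 1 i
    have hU : 0 ≤ stateBound (fun k => nnz (w k)) (fun k => nnz (v k)) F (t + 1) i := by
      unfold stateBound; positivity
    have hP : 0 ≤ stateBound (fun k => nnz (w k)) (fun k => nnz (v k)) F t (i + 1) := by
      unfold stateBound; positivity
    calc _ ≤ _ := abs_hiddenState_succ_succ_le (hψ (i + 1) h1 hi).1 (hψ (i + 1) h1 hi).2 t j
      _ ≤ _ := add_le_add
          (abs_mulVec_apply_le_mul_nnz hF0 hU (hw (i + 1) h1 hi) ih₁ j)
          (abs_mulVec_apply_le_mul_nnz hF0 hP (hv (i + 1) h1 hi) ih₂ j)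
      _ ≤ _ := stateBound_succ_succ hF (one_le_cast_on_Icc hwr hi) (one_le_cast_on_Icc hvr hi) t

theorem sum_abs_hiddenState_sub_le_diffBound (n : ℕ) {E δ : ℝ} (hE : 1 ≤ E) (hδ : 0 ≤ δ)
    (hψ : ∀ h, 1 ≤ h → h ≤ n → LipschitzWith 1 (ψ h) ∧ ψ h 0 = 0) (hx : ∀ s j, |x s j| ≤ 1)
    (hw : ∀ h, 1 ≤ h → h ≤ n → ∀ j k, |w h j k| ≤ E)
    (hv : ∀ h, 1 ≤ h → h ≤ n → ∀ j k, |v h j k| ≤ E)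
    (hwr : ∀ h, 1 ≤ h → h ≤ n → 1 ≤ nnz (w h)) (hvr : ∀ h, 1 ≤ h → h ≤ n → 1 ≤ nnz (v h))
    (hww' : ∀ h, 1 ≤ h → h ≤ n → IsSparsePerturbation (w h) (w' h) δ)
    (hvv' : ∀ h, 1 ≤ h → h ≤ n → IsSparsePerturbation (v h) (v' h) δ) :
    ∀ t i, i ≤ n → ∑ j, |hiddenState L w v ψ x t i j - hiddenState L w' v' ψ x t i j|
      ≤ diffBound (fun k => nnz (w k)) (fun k => nnz (v k)) (E + δ) δ t i := by
  have hE0 : 0 ≤ E := by linarith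
  have hF : 1 ≤ E + δ := by linarith
  have hz := abs_hiddenState_le_stateBound n hF hψ hx
    (fun h h1 h2 j k => (hw h h1 h2 j k).trans (le_add_of_nonneg_right hδ))
    (fun h h1 h2 j k => (hv h h1 h2 j k).trans (le_add_of_nonneg_right hδ)) hwr hvr
  refine grid_induction n (fun i => ?_) (fun t => ?_) fun t i hi ih₁ ih₂ => ?_
  · simp only [hiddenState_zero_apply, sub_self, abs_zero, sum_const_zero]
    unfold diffBound
    positivity
  · simp only [hiddenState_succ_zero, sub_self, abs_zero, sum_const_zero]
    unfold diffBound
    positivity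
  · have h1 : 1 ≤ i + 1 := Nat.le_add_left 1 i
    calc _ ≤ _ := sum_abs_hiddenState_sub_succ_succ_le (hψ (i + 1) h1 hi).1 t
      _ ≤ _ := add_le_add
          ((hww' (i + 1) h1 hi).sum_abs_mulVec_sub_mulVec_le hδ hE0
            (by unfold stateBound; positivity) (by unfold diffBound; positivity)
            (hw (i + 1) h1 hi) (hz (t + 1) i hi.le) (abs_le_of_sum_abs_le ih₁))
          ((hvv' (i + 1) h1 hi).sum_abs_mulVec_sub_mulVec_le hδ hE0
            (by unfold stateBound; positivity) (by unfold diffBound; positivity)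
            (hv (i + 1) h1 hi) (hz t (i + 1) hi) (abs_le_of_sum_abs_le ih₂))
      _ ≤ _ := diffBound_succ_succ hF hδ (one_le_cast_on_Icc hwr hi) (one_le_cast_on_Icc hvr hi) t

end Network

theorem hiddenState_diff_bound_truncated_general
    (H : ℕ)
    (L : ℕ → ℕ)
    (w w' : (h : ℕ) → Matrix (Fin (L h)) (Fin (L (h - 1))) ℝ)
    (v v' : (h : ℕ) → Matrix (Fin (L h)) (Fin (L h)) ℝ)
    (ψ : ℕ → ℝ → ℝ)
    (hψ : ∀ h, 1 ≤ h → h ≤ H - 1 → LipschitzWith 1 (ψ h) ∧ ψ h 0 = 0)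
    (x : ℕ → Fin (L 0) → ℝ) (hx : ∀ s j, |x s j| ≤ 1)
    (E : ℝ) (hE : 1 ≤ E)
    (hwE : ∀ h, 1 ≤ h → h ≤ H → ∀ j k, |w h j k| ≤ E)
    (hvE : ∀ h, 1 ≤ h → h ≤ H - 1 → ∀ j k, |v h j k| ≤ E)
    (hwr : ∀ h, 1 ≤ h → h ≤ H → 1 ≤ nnz (w h))
    (hvr : ∀ h, 1 ≤ h → h ≤ H - 1 → 1 ≤ nnz (v h))
    (δ₁ : ℝ) (hδ₁ : 0 ≤ δ₁)
    (hwclose : ∀ h, 1 ≤ h → h ≤ H → ∀ j k,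
      (w h j k = 0 → w' h j k = 0) ∧ (w h j k ≠ 0 → |w h j k - w' h j k| ≤ δ₁))
    (hvclose : ∀ h, 1 ≤ h → h ≤ H - 1 → ∀ j k,
      (v h j k = 0 → v' h j k = 0) ∧ (v h j k ≠ 0 → |v h j k - v' h j k| ≤ δ₁))
    (t : ℕ) (i : ℕ) (hi2 : i ≤ H - 1) :
    ∑ j, |hiddenState L w v ψ x t i j - hiddenState L w' v' ψ x t i j| ≤
      (t : ℝ) ^ (i + 1) * (i : ℝ) * δ₁ * (∏ k ∈ Finset.Icc 1 i, (nnz (w k) : ℝ))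
        * (∏ k ∈ Finset.Icc 1 i, (nnz (v k) : ℝ)) ^ (t - 1)
        * (E + δ₁) ^ ((i + 1) * t - 2) := by
  have hle : ∀ h, h ≤ H - 1 → h ≤ H := fun h hh => hh.trans (Nat.sub_le H 1)
  exact sum_abs_hiddenState_sub_le_diffBound (H - 1) hE hδ₁ hψ hx
    (fun h h1 h2 => hwE h h1 (hle h h2)) hvE (fun h h1 h2 => hwr h h1 (hle h h2)) hvr
    (fun h h1 h2 => .of_forall hδ₁ (hwclose h h1 (hle h h2)))
    (fun h h1 h2 => .of_forall hδ₁ (hvclose h h1 h2)) t i hi2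

/-- Lemma (hidden-state difference between a sparse RNN `β = (w, v)` and its truncated
approximation `β̌ = (w', v')` supported on the support `γ` of `β` with `|β_j - β̌_j| ≤ δ₁`
on `γ`): for every `t ≥ 1` and hidden layer `1 ≤ i ≤ H-1`,
`∑_j |z_t^i(β)(j) - z_t^i(β̌)(j)| ≤ t^{i+1} i δ₁ (∏_{k=1}^i r_{w_k}) (∏_{k=1}^i r_{v_k})^{t-1}
  (E+δ₁)^{(i+1)t-2}`. -/
theorem hiddenState_diff_bound_truncated
    (H : ℕ) (hH : 2 ≤ H)
    (L : ℕ → ℕ) (hL : ∀ h ≤ H, 1 ≤ L h)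
    (w w' : (h : ℕ) → Matrix (Fin (L h)) (Fin (L (h - 1))) ℝ)
    (v v' : (h : ℕ) → Matrix (Fin (L h)) (Fin (L h)) ℝ)
    (ψ : ℕ → ℝ → ℝ)
    (hψ : ∀ h, 1 ≤ h → h ≤ H - 1 → LipschitzWith 1 (ψ h) ∧ ψ h 0 = 0)
    (x : ℕ → Fin (L 0) → ℝ) (hx : ∀ s j, |x s j| ≤ 1)
    (E : ℝ) (hE : 1 ≤ E)
    (hwE : ∀ h, 1 ≤ h → h ≤ H → ∀ j k, |w h j k| ≤ E)
    (hvE : ∀ h, 1 ≤ h → h ≤ H - 1 → ∀ j k, |v h j k| ≤ E)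
    (hwr : ∀ h, 1 ≤ h → h ≤ H → 1 ≤ nnz (w h))
    (hvr : ∀ h, 1 ≤ h → h ≤ H - 1 → 1 ≤ nnz (v h))
    (δ₁ : ℝ) (hδ₁ : 0 ≤ δ₁)
    (hwclose : ∀ h, 1 ≤ h → h ≤ H → ∀ j k,
      (w h j k = 0 → w' h j k = 0) ∧ (w h j k ≠ 0 → |w h j k - w' h j k| ≤ δ₁))
    (hvclose : ∀ h, 1 ≤ h → h ≤ H - 1 → ∀ j k,
      (v h j k = 0 → v' h j k = 0) ∧ (v h j k ≠ 0 → |v h j k - v' h j k| ≤ δ₁))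
    (t : ℕ) (ht : 1 ≤ t) (i : ℕ) (hi1 : 1 ≤ i) (hi2 : i ≤ H - 1) :
    ∑ j, |hiddenState L w v ψ x t i j - hiddenState L w' v' ψ x t i j| ≤
      (t : ℝ) ^ (i + 1) * (i : ℝ) * δ₁ * (∏ k ∈ Finset.Icc 1 i, (nnz (w k) : ℝ))
        * (∏ k ∈ Finset.Icc 1 i, (nnz (v k) : ℝ)) ^ (t - 1)
        * (E + δ₁) ^ ((i + 1) * t - 2) :=
  hiddenState_diff_bound_truncated_general H L w w' v v' ψ hψ x hx E hE hwE hvE hwr hvr δ₁ hδ₁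
    hwclose hvclose t i hi2
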